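/- arXiv:1908.09503 — 3 statements merged into one kernel-verified Lean document; each statement's English description precedes it below -/
import Mathlib

section
/- Let c > 0. For 1 + exp(−(c/2)·√(log x)) ≤ r ≤ x/4, one has (x/log x)·exp(−c·√(log(x/r))) ≪ x·(log r)/((log x)²·log(x/r)), with implicit constant depending only on c. -/
/-- `u^2 e^{-au} ≤ 4/a^2` for `a>0`, `u≥0`. -/
lemma aux_sq (a u : ℝ) (ha : 0 < a) (hu : 0 ≤ u) :
    u ^ 2 * Real.exp (-(a * u)) ≤ 4 / a ^ 2 := by
  have h1 : a * u / 2 ≤ Real.exp (a * u / 2) := by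
    have := Real.add_one_le_exp (a * u / 2); linarith
  have h2 : (a * u / 2) ^ 2 ≤ Real.exp (a * u) := by
    have := pow_le_pow_left₀ (by positivity) h1 2
    calc (a * u / 2) ^ 2 ≤ Real.exp (a * u / 2) ^ 2 := this
      _ = Real.exp (a * u) := by rw [sq, ← Real.exp_add]; ring_nf
  have hE : (0:ℝ) < Real.exp (a * u) := Real.exp_pos _
  rw [Real.exp_neg, ← one_div, mul_one_div, div_le_div_iff₀ hE (by positivity)]
  nlinarith

/-- `u^4 e^{-au} ≤ 256/a^4` for `a>0`, `u≥0`. -/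
lemma aux_qu (a u : ℝ) (ha : 0 < a) (hu : 0 ≤ u) :
    u ^ 4 * Real.exp (-(a * u)) ≤ 256 / a ^ 4 := by
  have h1 : a * u / 4 ≤ Real.exp (a * u / 4) := by
    have := Real.add_one_le_exp (a * u / 4); linarith
  have h2 : (a * u / 4) ^ 4 ≤ Real.exp (a * u) := by
    have := pow_le_pow_left₀ (by positivity) h1 4
    calc (a * u / 4) ^ 4 ≤ Real.exp (a * u / 4) ^ 4 := this
      _ = Real.exp (4 * (a * u / 4)) := by
            rw [show ((4:ℝ)) = ((4:ℕ):ℝ) by norm_num, Real.exp_nat_mul]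
      _ = Real.exp (a * u) := by ring_nf
  have hE : (0:ℝ) < Real.exp (a * u) := Real.exp_pos _
  rw [Real.exp_neg, ← one_div, mul_one_div, div_le_div_iff₀ hE (by positivity)]
  nlinarith

/-- `t/2 ≤ log (1+t)` for `0 ≤ t ≤ 1`. -/
lemma aux_log (t : ℝ) (h0 : 0 ≤ t) (h1 : t ≤ 1) : t / 2 ≤ Real.log (1 + t) := by
  have hpos : (0:ℝ) < 1 + t := by linarith
  have h := Real.log_le_sub_one_of_pos (show (0:ℝ) < (1 + t)⁻¹ by positivity)
  rw [Real.log_inv] at h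
  have h2 : 1 - (1 + t)⁻¹ ≤ Real.log (1 + t) := by linarith
  have hy : (1:ℝ) / 2 ≤ (1 + t)⁻¹ := by
    rw [inv_eq_one_div]
    exact one_div_le_one_div_of_le hpos (by linarith)
  have hinv2 : (1 + t)⁻¹ + t * (1 + t)⁻¹ = 1 := by field_simp
  have hmul : t * (1 / 2) ≤ t * (1 + t)⁻¹ := mul_le_mul_of_nonneg_left hy h0
  linarith

set_option maxHeartbeats 1000000 in
theorem stmt_6 (c : ℝ) (hc : 0 < c) :
    ∃ C : ℝ, 0 < C ∧ ∀ x r : ℝ,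
      1 + Real.exp (-(c / 2) * Real.sqrt (Real.log x)) ≤ r → r ≤ x / 4 →
      x / Real.log x * Real.exp (-c * Real.sqrt (Real.log (x / r))) ≤
        C * (x * Real.log r / ((Real.log x) ^ 2 * Real.log (x / r))) := by
  set δ : ℝ := c * (1 - Real.sqrt 2 / 2) with hδdef
  have hs2 : Real.sqrt 2 < 2 := by
    nlinarith [Real.sq_sqrt (by norm_num : (0:ℝ) ≤ 2), Real.sqrt_nonneg 2]
  have hδ : 0 < δ := by
    have : 0 < 1 - Real.sqrt 2 / 2 := by linarith
    positivity
  set A : ℝ := 4 / c ^ 2 with hAdef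
  set B : ℝ := 256 / δ ^ 4 with hBdef
  have hA : 0 < A := by positivity
  have hB : 0 < B := by positivity
  refine ⟨2 * A + 8 * B, by positivity, ?_⟩
  intro x r hr1 hr2
  set L := Real.log x with hLdef
  set M := Real.log (x / r) with hMdef
  have hep : 0 < Real.exp (-(c / 2) * Real.sqrt L) := Real.exp_pos _
  have hr0 : 1 < r := by linarith
  have hx4 : 4 * r ≤ x := by linarith
  have hx : 4 < x := by nlinarith
  have he1 : Real.exp 1 < 4 := by
    have := Real.exp_one_lt_d9; linarith
  have hL1 : 1 < L := by
    have := Real.log_lt_log (Real.exp_pos 1) (by linarith : Real.exp 1 < x)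
    simpa using this
  have hxr4 : 4 ≤ x / r := by
    rw [le_div_iff₀ (by linarith)]; linarith
  have hM1 : 1 < M := by
    have := Real.log_lt_log (Real.exp_pos 1) (by linarith : Real.exp 1 < x / r)
    simpa using this
  have hlr : 0 < Real.log r := Real.log_pos hr0
  have hMeq : M = L - Real.log r :=
    Real.log_div (by linarith) (by linarith)
  have hML : M < L := by linarith
  have hLpos : (0:ℝ) < L := by linarith
  have hMpos : (0:ℝ) < M := by linarith
  have hxpos : (0:ℝ) < x := by linarith
  -- lower bound for log r
  have hexple : Real.exp (-(c / 2) * Real.sqrt L) ≤ 1 := by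
    rw [Real.exp_le_one_iff]
    have := Real.sqrt_nonneg L
    nlinarith
  have hlr2 : Real.exp (-(c / 2) * Real.sqrt L) ≤ 2 * Real.log r := by
    have h := aux_log (Real.exp (-(c / 2) * Real.sqrt L)) (le_of_lt hep) hexple
    have hmono : Real.log (1 + Real.exp (-(c / 2) * Real.sqrt L)) ≤ Real.log r :=
      Real.log_le_log (by linarith) hr1
    linarith
  -- key inequality
  have key : L * M * Real.exp (-c * Real.sqrt M) ≤ (2 * A + 8 * B) * Real.log r := by
    rcases le_or_gt M (L / 2) with hcase | hcase
    · -- M ≤ L/2 : log r ≥ L/2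
      have hlrL : L ≤ 2 * Real.log r := by linarith
      have hbd : M * Real.exp (-c * Real.sqrt M) ≤ A := by
        have := aux_sq c (Real.sqrt M) hc (Real.sqrt_nonneg M)
        rw [Real.sq_sqrt hMpos.le] at this
        rw [show -c * Real.sqrt M = -(c * Real.sqrt M) by ring]
        exact this
      have h1 : L * M * Real.exp (-c * Real.sqrt M) ≤ L * A := by
        rw [mul_assoc]
        exact mul_le_mul_of_nonneg_left hbd hLpos.le
      have h2 : L * A ≤ 2 * Real.log r * A := mul_le_mul_of_nonneg_right hlrL hA.le
      have h3 : (0:ℝ) ≤ 8 * B * Real.log r := by positivity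
      nlinarith
    · -- L/2 < M
      set t := Real.sqrt (L / 2) with htdef
      have ht0 : 0 ≤ t := Real.sqrt_nonneg _
      have htsq : t ^ 2 = L / 2 := Real.sq_sqrt (by linarith)
      have hst : Real.sqrt L = Real.sqrt 2 * t := by
        rw [htdef, ← Real.sqrt_mul (by norm_num : (0:ℝ) ≤ 2)]
        congr 1; ring
      have hMt : t ≤ Real.sqrt M := by
        rw [htdef]
        exact Real.sqrt_le_sqrt (by linarith)
      have hEle : Real.exp (-c * Real.sqrt M) ≤ Real.exp (-(c * t)) := by
        apply Real.exp_le_exp.mpr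
        nlinarith
      have hsplit : Real.exp (-(c * t)) =
          Real.exp (-(δ * t)) * Real.exp (-(c / 2) * Real.sqrt L) := by
        rw [← Real.exp_add]
        congr 1
        rw [hst, hδdef]; ring
      have hqu : t ^ 4 * Real.exp (-(δ * t)) ≤ B := aux_qu δ t hδ ht0
      have hE2 : (0:ℝ) ≤ Real.exp (-(δ * t)) := (Real.exp_pos _).le
      have hLsq : L * L = 4 * t ^ 4 := by nlinarith
      have h1 : L * M * Real.exp (-c * Real.sqrt M) ≤ L * L * Real.exp (-(c * t)) := by
        have g1 : L * M * Real.exp (-c * Real.sqrt M) ≤ L * L * Real.exp (-c * Real.sqrt M) := by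
          have : L * M ≤ L * L := mul_le_mul_of_nonneg_left hML.le hLpos.le
          exact mul_le_mul_of_nonneg_right this (Real.exp_pos _).le
        have g2 : L * L * Real.exp (-c * Real.sqrt M) ≤ L * L * Real.exp (-(c * t)) :=
          mul_le_mul_of_nonneg_left hEle (by positivity)
        linarith
      have h2 : L * L * Real.exp (-(c * t)) ≤
          4 * B * Real.exp (-(c / 2) * Real.sqrt L) := by
        rw [hsplit, hLsq]
        have g3 : 4 * t ^ 4 * Real.exp (-(δ * t)) ≤ 4 * B := by linarith
        calc 4 * t ^ 4 * (Real.exp (-(δ * t)) * Real.exp (-(c / 2) * Real.sqrt L))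
            = (4 * (t ^ 4 * Real.exp (-(δ * t)))) * Real.exp (-(c / 2) * Real.sqrt L) := by
              ring
          _ ≤ (4 * B) * Real.exp (-(c / 2) * Real.sqrt L) := by
              exact mul_le_mul_of_nonneg_right (by linarith) hep.le
      have h3 : 4 * B * Real.exp (-(c / 2) * Real.sqrt L) ≤ 4 * B * (2 * Real.log r) :=
        mul_le_mul_of_nonneg_left hlr2 (by positivity)
      have h4 : (0:ℝ) ≤ 2 * A * Real.log r := by positivity
      nlinarith
  -- convert key to the stated form
  have heq1 : x / L * Real.exp (-c * Real.sqrt M) =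
      x * (L * M * Real.exp (-c * Real.sqrt M)) / (L ^ 2 * M) := by
    field_simp
  have heq2 : (2 * A + 8 * B) * (x * Real.log r / (L ^ 2 * M)) =
      x * ((2 * A + 8 * B) * Real.log r) / (L ^ 2 * M) := by
    ring
  rw [heq1, heq2]
  apply div_le_div_of_nonneg_right ?_ (by positivity)
  · exact mul_le_mul_of_nonneg_left key hxpos.le
end

section
/- For 1 ≤ r ≤ x/4 (with x large enough that log log 4 > 0 considerations apply), one has x·(log r)/((log x)²·log(x/r)) ≪ (x/log x)·(log log(xr) − log log(x/r))/(log log x), with an absolute implicit constant. -/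
lemma key9 (L s : ℝ) (hs : 0 ≤ s) (hls : Real.log 4 ≤ L - s) :
    s * Real.log L ≤ 2 * L * (L - s) * (Real.log (L + s) - Real.log (L - s)) := by
  have hlog2 := Real.log_two_gt_d9
  have h4 : Real.log 4 = 2 * Real.log 2 := by
    rw [show (4:ℝ) = 2 ^ 2 by norm_num, Real.log_pow]; push_cast; ring
  have h41 : (1.38:ℝ) < Real.log 4 := by rw [h4]; linarith
  have ht1 : 1 < L - s := by linarith
  have hL1 : 1 < L := by linarith
  have hLpos : 0 < L := by linarith
  have htpos : 0 < L - s := by linarith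
  have hlogL : 0 < Real.log L := Real.log_pos hL1
  have hLs : 0 < L + s := by linarith
  have hlogLleL : Real.log L ≤ L - 1 := Real.log_le_sub_one_of_pos hLpos
  set D := Real.log (L + s) - Real.log (L - s) with hD
  rcases le_or_gt (L / 2) (L - s) with h | h
  · -- case t ≥ L/2
    have h1 := Real.log_le_sub_one_of_pos (show 0 < (L - s)/(L + s) by positivity)
    rw [Real.log_div (by linarith) (by linarith)] at h1
    have h2 : 1 - (L - s)/(L + s) ≤ D := by rw [hD]; linarith
    have hfrac : (L - s)/(L + s) ≤ 1 := by rw [div_le_one hLs]; linarith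
    have hD0 : 0 ≤ D := by linarith
    have h4' : 2 * s ≤ (L + s) * D := by
      have hmul := mul_le_mul_of_nonneg_left h2 (le_of_lt hLs)
      have heq : (L + s) * (1 - (L - s)/(L + s)) = 2 * s := by field_simp; ring
      linarith [heq ▸ hmul]
    have hLD : s ≤ L * D := by nlinarith [mul_nonneg (le_of_lt htpos) hD0]
    nlinarith [mul_nonneg (mul_nonneg hLpos.le hD0) (by linarith : (0:ℝ) ≤ 2*(L-s) - L),
      mul_le_mul_of_nonneg_left hLD hLpos.le,
      mul_le_mul_of_nonneg_left hlogLleL hs]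
  · rcases le_or_gt (L - s) (Real.sqrt L) with h2 | h2
    · -- t ≤ √L
      have hlt : Real.log (L - s) ≤ Real.log L / 2 := by
        rw [← Real.log_sqrt hLpos.le]
        exact Real.log_le_log htpos h2
      have hge : Real.log L ≤ Real.log (L + s) := Real.log_le_log hLpos (by linarith)
      have hDlb : Real.log L / 2 ≤ D := by rw [hD]; linarith
      have hsL : s ≤ L := by linarith
      have b0 : (0:ℝ) ≤ 2*L*(L-s) := by positivity
      have b1 : 2*L*(L-s)*(Real.log L / 2) ≤ 2*L*(L-s)*D := mul_le_mul_of_nonneg_left hDlb b0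
      have b2 : s * Real.log L ≤ L * Real.log L := mul_le_mul_of_nonneg_right hsL hlogL.le
      have b3 : 1 * (L * Real.log L) ≤ (L - s) * (L * Real.log L) :=
        mul_le_mul_of_nonneg_right (show (1:ℝ) ≤ L - s by linarith) (mul_nonneg hLpos.le hlogL.le)
      nlinarith [b1, b2, b3]
    · -- t > √L
      have h3t : 3 * (L - s) ≤ L + s := by linarith
      have hlog3 : 1 ≤ Real.log 3 := by
        rw [Real.le_log_iff_exp_le (by norm_num : (0:ℝ) < 3)]
        exact le_of_lt (lt_of_lt_of_le Real.exp_one_lt_d9 (by norm_num))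
      have hD1 : 1 ≤ D := by
        have hl := Real.log_le_log (by positivity : (0:ℝ) < 3 * (L - s)) h3t
        rw [Real.log_mul (by norm_num) (ne_of_gt htpos)] at hl
        rw [hD]; linarith
      have hsq : Real.sqrt L * Real.sqrt L = L := Real.mul_self_sqrt hLpos.le
      have hsqnn : 0 ≤ Real.sqrt L := Real.sqrt_nonneg L
      have hlog2sqrt : Real.log L ≤ 2 * Real.sqrt L := by
        have h5 := Real.log_le_sub_one_of_pos (Real.sqrt_pos.mpr hLpos)
        rw [Real.log_sqrt hLpos.le] at h5
        linarith
      have c0 : (0:ℝ) ≤ 2*L := by linarith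
      have a1 : 2*L*(L-s) ≤ 2*L*(L-s)*D := by
        linarith [mul_nonneg (mul_nonneg c0 htpos.le) (show (0:ℝ) ≤ D - 1 by linarith)]
      have a2 : 2*L*Real.sqrt L ≤ 2*L*(L-s) := by
        linarith [mul_le_mul_of_nonneg_left h2.le c0]
      have a3 : L * Real.log L ≤ 2*L*Real.sqrt L := by
        linarith [mul_le_mul_of_nonneg_left hlog2sqrt hLpos.le]
      have a4 : s * Real.log L ≤ L * Real.log L :=
        mul_le_mul_of_nonneg_right (by linarith) hlogL.le
      linarith

theorem stmt_9 :
    ∃ C : ℝ, 0 < C ∧ ∀ x r : ℝ, 1 ≤ r → r ≤ x / 4 →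
      x * Real.log r / ((Real.log x) ^ 2 * Real.log (x / r)) ≤
        C * (x / Real.log x *
          (Real.log (Real.log (x * r)) - Real.log (Real.log (x / r))) /
            Real.log (Real.log x)) := by
  refine ⟨2, by norm_num, ?_⟩
  intro x r hr hrx
  have hx4 : (4:ℝ) ≤ x := by linarith
  have hxpos : (0:ℝ) < x := by linarith
  have hrpos : (0:ℝ) < r := by linarith
  have hlogdiv : Real.log (x / r) = Real.log x - Real.log r :=
    Real.log_div (ne_of_gt hxpos) (ne_of_gt hrpos)
  have hlogmul : Real.log (x * r) = Real.log x + Real.log r :=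
    Real.log_mul (ne_of_gt hxpos) (ne_of_gt hrpos)
  set L := Real.log x with hL
  set s := Real.log r with hs'
  have hs : 0 ≤ s := Real.log_nonneg hr
  have hls : Real.log 4 ≤ L - s := by
    have h1 : Real.log r ≤ Real.log (x/4) := Real.log_le_log hrpos hrx
    rw [Real.log_div (ne_of_gt hxpos) (by norm_num)] at h1
    linarith
  have hkey := key9 L s hs hls
  have hlog2 := Real.log_two_gt_d9
  have h4 : Real.log 4 = 2 * Real.log 2 := by
    rw [show (4:ℝ) = 2 ^ 2 by norm_num, Real.log_pow]; push_cast; ring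
  have h41 : (1.38:ℝ) < Real.log 4 := by rw [h4]; linarith
  have hL1 : 1 < L := by linarith
  have htpos : 0 < L - s := by linarith
  have hLpos : 0 < L := by linarith
  have hlogL : 0 < Real.log L := Real.log_pos hL1
  have hD0 : 0 ≤ Real.log (L + s) - Real.log (L - s) :=
    sub_nonneg.mpr (Real.log_le_log htpos (by linarith))
  rw [hlogdiv, hlogmul]
  have hRHS : 2 * (x / L * (Real.log (L + s) - Real.log (L - s)) / Real.log L)
      = (2 * x * (Real.log (L + s) - Real.log (L - s))) / (L * Real.log L) := by
    field_simp
  rw [hRHS, div_le_div_iff₀ (by positivity) (by positivity)]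
  nlinarith [mul_le_mul_of_nonneg_left hkey (by positivity : (0:ℝ) ≤ x * L)]
end

section
/- Define G_r(x) := ∫₂^{√(x/r)} Li(ru)/(log u) du + ∫_{√(x/r)}^{√x} Li(x/u)/(log u) du − (1/2)·Li(√x)². Then for 4r < x, the derivative of G_r with respect to x equals (log log(xr) − log log(x/r))/log x. -/
open MeasureTheory intervalIntegral Set Metric Filter
open scoped Topology

/-- The logarithmic integral `Li y = ∫₂^y du / log u`. -/
noncomputable def Li (y : ℝ) : ℝ := ∫ u in (2 : ℝ)..y, 1 / Real.log u

lemma li_hasDerivAt {t : ℝ} (ht : 1 < t) : HasDerivAt Li (1 / Real.log t) t := by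
  have hmeas : StronglyMeasurableAtFilter (fun u : ℝ => 1 / Real.log u) (𝓝 t) volume :=
    ⟨Set.univ, Filter.univ_mem, (measurable_const.div Real.measurable_log).aestronglyMeasurable⟩
  have hint : IntervalIntegrable (fun u : ℝ => 1 / Real.log u) volume 2 t := by
    apply ContinuousOn.intervalIntegrable
    intro u hu
    have hu1 : 1 < u := by
      rcases le_total 2 t with h | h
      · rw [Set.uIcc_of_le h] at hu; linarith [hu.1]
      · rw [Set.uIcc_of_ge h] at hu; linarith [hu.1]
    exact (continuousAt_const.div (Real.continuousAt_log (by linarith))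
      (ne_of_gt (Real.log_pos hu1))).continuousWithinAt
  exact integral_hasDerivAt_right hint hmeas
    (continuousAt_const.div (Real.continuousAt_log (by linarith)) (ne_of_gt (Real.log_pos ht)))

lemma sqrt_lip {lo hi a b : ℝ} (hlo : 1 ≤ lo) (ha : a ∈ Set.Icc lo hi) (hb : b ∈ Set.Icc lo hi) :
    |Real.sqrt b - Real.sqrt a| ≤ |b - a| := by
  have key := (convex_Icc lo hi).norm_image_sub_le_of_norm_hasDerivWithin_le
    (f := Real.sqrt) (f' := fun z => 1 / (2 * Real.sqrt z)) (C := 1)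
    (fun z hz => (Real.hasDerivAt_sqrt (by nlinarith [hz.1] : z ≠ 0)).hasDerivWithinAt)
    (fun z hz => by
      have h1 : (1:ℝ) ≤ Real.sqrt z := Real.one_le_sqrt.2 (by linarith [hz.1])
      rw [Real.norm_eq_abs, abs_of_nonneg (by positivity)]
      rw [div_le_one (by linarith)]
      linarith) ha hb
  simpa [Real.norm_eq_abs] using key

lemma hasDerivAt_zero_of_sq_bound {F : ℝ → ℝ} {x C : ℝ}
    (h : ∀ᶠ y in 𝓝 x, |F y| ≤ C * |y - x| ^ 2) : HasDerivAt F 0 x := by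
  have hFx : F x = 0 := by
    have h0 := h.self_of_nhds
    simp only [sub_self, abs_zero] at h0
    have h1 : |F x| ≤ 0 := by simpa using h0
    exact abs_eq_zero.mp (le_antisymm h1 (abs_nonneg _))
  rw [hasDerivAt_iff_isLittleO, Asymptotics.isLittleO_iff]
  intro δ hδ
  have hb : ∀ᶠ y in 𝓝 x, |y - x| < δ / (|C| + 1) := by
    have hpos : 0 < δ / (|C| + 1) := by positivity
    filter_upwards [Metric.ball_mem_nhds x hpos] with y hy
    rwa [Metric.mem_ball, Real.dist_eq] at hy
  filter_upwards [h, hb] with y h1 h2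
  rw [hFx]
  simp only [smul_zero, sub_zero, Real.norm_eq_abs]
  have hC : C ≤ |C| := le_abs_self C
  calc |F y| ≤ C * |y - x| ^ 2 := h1
    _ ≤ |C| * |y - x| ^ 2 := by nlinarith [sq_nonneg (y - x), sq_abs (y - x), abs_nonneg (y - x)]
    _ = (|C| * |y - x|) * |y - x| := by ring
    _ ≤ (|C| * (δ / (|C| + 1))) * |y - x| := by
        apply mul_le_mul_of_nonneg_right _ (abs_nonneg _)
        exact mul_le_mul_of_nonneg_left h2.le (abs_nonneg _)
    _ ≤ δ * |y - x| := by
        apply mul_le_mul_of_nonneg_right _ (abs_nonneg _)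
        rw [← mul_div_assoc, div_le_iff₀ (by positivity : (0:ℝ) < |C| + 1)]
        nlinarith [abs_nonneg C]

set_option maxHeartbeats 1000000 in
theorem stmt_14 (r : ℝ) (hr : 1 ≤ r) (x : ℝ) (hx : 4 * r < x) :
    HasDerivAt (fun y : ℝ =>
        (∫ u in (2 : ℝ)..Real.sqrt (y / r), Li (r * u) / Real.log u)
        + (∫ u in Real.sqrt (y / r)..Real.sqrt y, Li (y / u) / Real.log u)
        - (1 / 2) * Li (Real.sqrt y) ^ 2)
      ((Real.log (Real.log (x * r)) - Real.log (Real.log (x / r))) / Real.log x)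
      x := by
  have hr0 : (0:ℝ) < r := lt_of_lt_of_le one_pos hr
  have hx4 : (4:ℝ) < x := by nlinarith
  have hx0 : (0:ℝ) < x := by linarith
  have hlogx : 0 < Real.log x := Real.log_pos (by linarith)
  set ε : ℝ := (x - 4 * r) / 2 with hεdef
  have hε : 0 < ε := by rw [hεdef]; linarith
  have hε5 : 3 * x > 5 * ε := by rw [hεdef]; nlinarith
  have hεx : ε < x := by rw [hεdef]; nlinarith
  have hxm4 : 4 * r < x - ε := by rw [hεdef]; nlinarith
  have hxm4' : (4:ℝ) < x - ε := by nlinarith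
  have hxm0 : (0:ℝ) < x - ε := by linarith
  have hxmr4 : (4:ℝ) < (x - ε) / r := by rw [lt_div_iff₀ hr0]; nlinarith
  set s₀ : ℝ := Real.sqrt ((x - ε) / r) with hs₀def
  set t₁ : ℝ := Real.sqrt (x + ε) with ht₁def
  have sqrt4 : Real.sqrt 4 = 2 := by
    rw [show (4:ℝ) = 2 ^ 2 by norm_num, Real.sqrt_sq (by norm_num)]
  have hs₀2 : 2 < s₀ := by
    rw [hs₀def, ← sqrt4]
    exact Real.sqrt_lt_sqrt (by norm_num) hxmr4
  have hs₀0 : (0:ℝ) < s₀ := by linarith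
  have ht₁0 : 0 < t₁ := Real.sqrt_pos.2 (by linarith)
  have hs₀t₁ : s₀ ≤ t₁ := by
    rw [hs₀def, ht₁def]
    apply Real.sqrt_le_sqrt
    have := div_le_self hxm0.le hr
    linarith
  have ht₁lt : t₁ < x - ε := by
    have h1 : t₁ ^ 2 = x + ε := Real.sq_sqrt (by linarith)
    nlinarith [Real.sqrt_nonneg (x + ε)]
  set c : ℝ := (x - ε) / t₁ with hcdef
  have hc1 : 1 < c := by rw [hcdef, lt_div_iff₀ ht₁0]; linarith
  have hlogc : 0 < Real.log c := Real.log_pos hc1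
  have hlog2 : 0 < Real.log 2 := Real.log_pos one_lt_two
  set M : ℝ := 1 / Real.log c * (1 / 2) / Real.log 2 with hMdef
  have hM0 : 0 < M := by rw [hMdef]; positivity
  set f' : ℝ → ℝ → ℝ := fun y u => 1 / Real.log (y / u) * (1 / u) / Real.log u with hf'def
  -- membership facts
  have hyIcc : ∀ y ∈ Metric.ball x ε, y ∈ Set.Icc (x - ε) (x + ε) := by
    intro y hy
    rw [Metric.mem_ball, Real.dist_eq] at hy
    have := abs_lt.1 hy
    exact ⟨by linarith [this.1], by linarith [this.2]⟩
  have hxIcc : x ∈ Set.Icc (x - ε) (x + ε) := ⟨by linarith, by linarith⟩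
  have huProps : ∀ y ∈ Set.Icc (x - ε) (x + ε), ∀ u ∈ Set.Icc s₀ t₁, 2 < u ∧ c ≤ y / u := by
    intro y hy u hu
    refine ⟨lt_of_lt_of_le hs₀2 hu.1, ?_⟩
    rw [hcdef]
    exact div_le_div₀ (by linarith [hy.1]) hy.1 (lt_of_lt_of_le hs₀0 hu.1) hu.2
  -- differentiability, bound, continuity of the parametric integrand
  have hfd : ∀ y ∈ Set.Icc (x - ε) (x + ε), ∀ u ∈ Set.Icc s₀ t₁,
      HasDerivAt (fun z => Li (z / u) / Real.log u) (f' y u) y := by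
    intro y hy u hu
    obtain ⟨hu2, hcyu⟩ := huProps y hy u hu
    have h1 : 1 < y / u := lt_of_lt_of_le hc1 hcyu
    exact ((li_hasDerivAt h1).comp y ((hasDerivAt_id y).div_const u)).div_const (Real.log u)
  have hbd : ∀ y ∈ Set.Icc (x - ε) (x + ε), ∀ u ∈ Set.Icc s₀ t₁, ‖f' y u‖ ≤ M := by
    intro y hy u hu
    obtain ⟨hu2, hcyu⟩ := huProps y hy u hu
    have hu0 : (0:ℝ) < u := by linarith
    have hyu1 : 1 < y / u := lt_of_lt_of_le hc1 hcyu
    have hl1 : 0 < Real.log (y / u) := Real.log_pos hyu1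
    have hl2 : 0 < Real.log u := Real.log_pos (by linarith)
    have hlc : Real.log c ≤ Real.log (y / u) := Real.log_le_log (by positivity) hcyu
    have hl2' : Real.log 2 ≤ Real.log u := Real.log_le_log (by norm_num) (by linarith)
    rw [hf'def]
    rw [Real.norm_eq_abs, abs_of_pos (by positivity), hMdef]
    have b1 : 1 / Real.log (y / u) ≤ 1 / Real.log c := one_div_le_one_div_of_le hlogc hlc
    have b2 : 1 / u ≤ 1 / 2 := one_div_le_one_div_of_le two_pos (by linarith)
    have b3 : 1 / Real.log (y / u) * (1 / u) ≤ 1 / Real.log c * (1 / 2) :=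
      mul_le_mul b1 b2 (by positivity) (by positivity)
    exact div_le_div₀ (by positivity) b3 hlog2 hl2'
  have hfc : ∀ y ∈ Set.Icc (x - ε) (x + ε),
      ContinuousOn (fun u => Li (y / u) / Real.log u) (Set.Icc s₀ t₁) := by
    intro y hy u hu
    obtain ⟨hu2, hcyu⟩ := huProps y hy u hu
    have hu0 : (0:ℝ) < u := by linarith
    have h1 : 1 < y / u := lt_of_lt_of_le hc1 hcyu
    apply ContinuousAt.continuousWithinAt
    exact ((li_hasDerivAt h1).continuousAt.comp
        (continuousAt_const.div continuousAt_id hu0.ne')).div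
      (Real.continuousAt_log hu0.ne') (ne_of_gt (Real.log_pos (by linarith)))
  have hfc' : ContinuousOn (f' x) (Set.Icc s₀ t₁) := by
    intro u hu
    obtain ⟨hu2, hcyu⟩ := huProps x hxIcc u hu
    have hu0 : (0:ℝ) < u := by linarith
    have h1 : 1 < x / u := lt_of_lt_of_le hc1 hcyu
    apply ContinuousAt.continuousWithinAt
    have c1 : ContinuousAt (fun v : ℝ => Real.log (x / v)) u :=
      (Real.continuousAt_log (by positivity)).comp
        (continuousAt_const.div continuousAt_id hu0.ne')
    exact ((continuousAt_const.div c1 (ne_of_gt (Real.log_pos h1))).mul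
        (continuousAt_const.div continuousAt_id hu0.ne')).div
      (Real.continuousAt_log hu0.ne') (ne_of_gt (Real.log_pos (by linarith)))
  have hsub : ∀ p ∈ Set.Icc s₀ t₁, ∀ q ∈ Set.Icc s₀ t₁, Set.uIcc p q ⊆ Set.Icc s₀ t₁ := by
    intro p hp q hq
    have h : Set.uIcc p q ⊆ Set.uIcc s₀ t₁ := Set.uIcc_subset_uIcc
      (by rw [Set.uIcc_of_le hs₀t₁]; exact hp) (by rw [Set.uIcc_of_le hs₀t₁]; exact hq)
    rwa [Set.uIcc_of_le hs₀t₁] at h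
  have hInt : ∀ y ∈ Set.Icc (x - ε) (x + ε), ∀ p ∈ Set.Icc s₀ t₁, ∀ q ∈ Set.Icc s₀ t₁,
      IntervalIntegrable (fun u => Li (y / u) / Real.log u) volume p q :=
    fun y hy p hp q hq => ((hfc y hy).mono (hsub p hp q hq)).intervalIntegrable
  -- the two square-root points
  set s : ℝ := Real.sqrt (x / r) with hsdef
  set t : ℝ := Real.sqrt x with htdef
  have hamem : ∀ y ∈ Set.Icc (x - ε) (x + ε), Real.sqrt (y / r) ∈ Set.Icc s₀ t₁ := by
    intro y hy
    constructor
    · rw [hs₀def]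
      gcongr
      exact hy.1
    · rw [ht₁def]
      apply Real.sqrt_le_sqrt
      have h1 : y / r ≤ y := div_le_self (by linarith [hy.1]) hr
      linarith [hy.2]
  have hbmem : ∀ y ∈ Set.Icc (x - ε) (x + ε), Real.sqrt y ∈ Set.Icc s₀ t₁ := by
    intro y hy
    constructor
    · rw [hs₀def]
      apply Real.sqrt_le_sqrt
      have := div_le_self hxm0.le hr
      linarith [hy.1]
    · rw [ht₁def]
      exact Real.sqrt_le_sqrt hy.2
  have hsmem : s ∈ Set.Icc s₀ t₁ := hamem x hxIcc
  have htmem : t ∈ Set.Icc s₀ t₁ := hbmem x hxIcc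
  have hs2 : 2 < s := lt_of_lt_of_le hs₀2 hsmem.1
  have hs0 : (0:ℝ) < s := by linarith
  have ht2 : 2 < t := lt_of_lt_of_le hs₀2 htmem.1
  have ht0 : (0:ℝ) < t := by linarith
  have hst : s ≤ t := by
    rw [hsdef, htdef]
    exact Real.sqrt_le_sqrt (div_le_self hx0.le hr)
  have hlogs : 0 < Real.log s := Real.log_pos (by linarith)
  have hlogt : 0 < Real.log t := Real.log_pos (by linarith)
  have hxs : x / s = r * s := by
    have hss : s * s = x / r := by rw [hsdef]; exact Real.mul_self_sqrt (by positivity)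
    rw [div_eq_iff hs0.ne', mul_assoc, hss]
    field_simp
  have hxt : x / t = t := by rw [htdef]; exact Real.div_sqrt
  -- derivatives of the endpoint maps
  have hsd : HasDerivAt (fun y : ℝ => Real.sqrt (y / r)) (1 / (2 * s) * (1 / r)) x := by
    have h2 : HasDerivAt Real.sqrt (1 / (2 * Real.sqrt (x / r))) (x / r) :=
      Real.hasDerivAt_sqrt (by positivity)
    exact h2.comp x ((hasDerivAt_id x).div_const r)
  have htd : HasDerivAt (fun y : ℝ => Real.sqrt y) (1 / (2 * t)) x :=
    Real.hasDerivAt_sqrt hx0.ne'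
  -- piece A
  have hcontA : ∀ v : ℝ, 1 < v → ContinuousAt (fun u => Li (r * u) / Real.log u) v := by
    intro v hv
    have hrv : 1 < r * v := by nlinarith
    have hv0 : v ≠ 0 := by positivity
    exact ((li_hasDerivAt hrv).continuousAt.comp
        (continuousAt_const.mul continuousAt_id)).div
      (Real.continuousAt_log hv0) (ne_of_gt (Real.log_pos hv))
  have hintA : IntervalIntegrable (fun u => Li (r * u) / Real.log u) volume 2 s := by
    apply ContinuousOn.intervalIntegrable
    intro u hu
    rw [Set.uIcc_of_le (by linarith : (2:ℝ) ≤ s)] at hu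
    exact (hcontA u (by linarith [hu.1])).continuousWithinAt
  have hmeasA : StronglyMeasurableAtFilter (fun u => Li (r * u) / Real.log u) (𝓝 s) volume :=
    ContinuousAt.stronglyMeasurableAtFilter isOpen_Ioi (fun v hv => hcontA v hv) s
      (by simp only [Set.mem_Ioi]; linarith)
  have hA : HasDerivAt (fun y : ℝ => ∫ u in (2:ℝ)..Real.sqrt (y / r), Li (r * u) / Real.log u)
      (Li (r * s) / Real.log s * (1 / (2 * s) * (1 / r))) x :=
    by have := (integral_hasDerivAt_right hintA hmeasA (hcontA s (by linarith))).comp x hsd; exact this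
  -- piece C
  have hLs : HasDerivAt (fun y : ℝ => Li (Real.sqrt y)) (1 / Real.log t * (1 / (2 * t))) x :=
    (li_hasDerivAt (by linarith : (1:ℝ) < t)).comp x htd
  have hC : HasDerivAt (fun y : ℝ => 1 / 2 * Li (Real.sqrt y) ^ 2)
      (Li t / Real.log t * (1 / (2 * t))) x := by
    have h := (hLs.mul hLs).const_mul (1/2 : ℝ)
    have h2 : HasDerivAt (fun y : ℝ => 1 / 2 * Li (Real.sqrt y) ^ 2)
        ((1/2 : ℝ) * (1 / Real.log t * (1 / (2 * t)) * Li (Real.sqrt x)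
          + Li (Real.sqrt x) * (1 / Real.log t * (1 / (2 * t))))) x :=
      h.congr_of_eventuallyEq (Filter.Eventually.of_forall (fun y => by simp only [Pi.mul_apply]; ring))
    apply h2.congr_deriv
    rw [htdef]
    ring
  -- continuity facts for f x on Ioo 1 x
  have hcontx : ∀ v ∈ Set.Ioo (1:ℝ) x, ContinuousAt (fun u => Li (x / u) / Real.log u) v := by
    intro v hv
    have hv1 : 1 < v := hv.1
    have hv0 : (0:ℝ) < v := by linarith
    have hxv : 1 < x / v := (one_lt_div hv0).2 hv.2
    exact ((li_hasDerivAt hxv).continuousAt.comp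
        (continuousAt_const.div continuousAt_id hv0.ne')).div
      (Real.continuousAt_log hv0.ne') (ne_of_gt (Real.log_pos hv1))
  have hsltx : s < x := by
    calc s ≤ t := hst
      _ < Real.sqrt (x ^ 2) := by rw [htdef]; exact Real.sqrt_lt_sqrt hx0.le (by nlinarith)
      _ = x := Real.sqrt_sq hx0.le
  have htltx : t < x := by
    calc t < Real.sqrt (x ^ 2) := by rw [htdef]; exact Real.sqrt_lt_sqrt hx0.le (by nlinarith)
      _ = x := Real.sqrt_sq hx0.le
  have hmeasT : StronglyMeasurableAtFilter (fun u => Li (x / u) / Real.log u) (𝓝 t) volume :=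
    ContinuousAt.stronglyMeasurableAtFilter isOpen_Ioo hcontx t ⟨by linarith, htltx⟩
  have hmeasS : StronglyMeasurableAtFilter (fun u => Li (x / u) / Real.log u) (𝓝 s) volume :=
    ContinuousAt.stronglyMeasurableAtFilter isOpen_Ioo hcontx s ⟨by linarith, hsltx⟩
  -- piece Q : parametric integral over the fixed interval s..t
  have hIsub : Set.uIoc s t ⊆ Set.Icc s₀ t₁ :=
    Set.uIoc_subset_uIcc.trans (hsub s hsmem t htmem)
  have hQ : HasDerivAt (fun y : ℝ => ∫ u in s..t, Li (y / u) / Real.log u)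
      (∫ u in s..t, f' x u) x := by
    refine (intervalIntegral.hasDerivAt_integral_of_dominated_loc_of_deriv_le
      (F := fun y u => Li (y / u) / Real.log u) (F' := f') (bound := fun _ => M)
      (Metric.ball_mem_nhds x hε) ?_ ?_ ?_ ?_ ?_ ?_).2
    · filter_upwards [Metric.ball_mem_nhds x hε] with y hy
      exact ((hfc y (hyIcc y hy)).mono hIsub).aestronglyMeasurable measurableSet_uIoc
    · exact hInt x hxIcc s hsmem t htmem
    · exact (hfc'.mono hIsub).aestronglyMeasurable measurableSet_uIoc
    · apply Filter.Eventually.of_forall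
      intro u hu y hy
      exact hbd y (hyIcc y hy) u (hIsub hu)
    · exact intervalIntegrable_const
    · apply Filter.Eventually.of_forall
      intro u hu y hy
      exact hfd y (hyIcc y hy) u (hIsub hu)
  -- piece T1 : moving right endpoint
  have hT1a : HasDerivAt (fun y : ℝ => ∫ u in t..Real.sqrt y, Li (x / u) / Real.log u)
      (Li (x / t) / Real.log t * (1 / (2 * t))) x :=
    (integral_hasDerivAt_right (IntervalIntegrable.refl) hmeasT
      (hcontx t ⟨by linarith, htltx⟩)).comp x htd
  have hT1b : HasDerivAt
      (fun y : ℝ => ∫ u in t..Real.sqrt y, (Li (y / u) / Real.log u - Li (x / u) / Real.log u))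
      0 x := by
    apply hasDerivAt_zero_of_sq_bound (C := M)
    filter_upwards [Metric.ball_mem_nhds x hε] with y hy
    have hyI := hyIcc y hy
    have hby := hbmem y hyI
    have hdiffbound : ∀ u ∈ Set.uIoc t (Real.sqrt y),
        ‖Li (y / u) / Real.log u - Li (x / u) / Real.log u‖ ≤ M * ‖y - x‖ := by
      intro u hu
      have huI : u ∈ Set.Icc s₀ t₁ := (Set.uIoc_subset_uIcc.trans (hsub t htmem _ hby)) hu
      exact (convex_Icc (x - ε) (x + ε)).norm_image_sub_le_of_norm_hasDerivWithin_le
        (f := fun z => Li (z / u) / Real.log u) (f' := fun z => f' z u)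
        (fun z hz => (hfd z hz u huI).hasDerivWithinAt)
        (fun z hz => hbd z hz u huI) hxIcc hyI
    have h2 := intervalIntegral.norm_integral_le_of_norm_le_const hdiffbound
    rw [Real.norm_eq_abs] at h2
    have h3 : |Real.sqrt y - t| ≤ |y - x| := by
      rw [htdef]
      exact sqrt_lip (by linarith) hxIcc hyI
    calc |∫ u in t..Real.sqrt y, (Li (y / u) / Real.log u - Li (x / u) / Real.log u)|
        ≤ M * ‖y - x‖ * |Real.sqrt y - t| := h2
      _ = M * |y - x| * |Real.sqrt y - t| := by rw [Real.norm_eq_abs]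
      _ ≤ M * |y - x| * |y - x| := by
          apply mul_le_mul_of_nonneg_left h3 (by positivity)
      _ = M * |y - x| ^ 2 := by ring
  have hT1 : HasDerivAt (fun y : ℝ => ∫ u in t..Real.sqrt y, Li (y / u) / Real.log u)
      (Li (x / t) / Real.log t * (1 / (2 * t)) + 0) x := by
    apply HasDerivAt.congr_of_eventuallyEq (hT1a.add hT1b)
    filter_upwards [Metric.ball_mem_nhds x hε] with y hy
    have hyI := hyIcc y hy
    have hby := hbmem y hyI
    have i1 : IntervalIntegrable (fun u => Li (x / u) / Real.log u) volume t (Real.sqrt y) :=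
      hInt x hxIcc t htmem _ hby
    have i2 : IntervalIntegrable (fun u => Li (y / u) / Real.log u) volume t (Real.sqrt y) :=
      hInt y hyI t htmem _ hby
    simp only [Pi.add_apply]
    rw [← intervalIntegral.integral_add i1 (i2.sub i1)]
    exact intervalIntegral.integral_congr (fun u _ => by ring)
  -- piece T2 : moving left endpoint
  have hT2a : HasDerivAt (fun y : ℝ => ∫ u in Real.sqrt (y / r)..s, Li (x / u) / Real.log u)
      (-(Li (x / s) / Real.log s) * (1 / (2 * s) * (1 / r))) x :=
    by have := (integral_hasDerivAt_left (IntervalIntegrable.refl) hmeasS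
      (hcontx s ⟨by linarith, hsltx⟩)).comp x hsd; exact this
  have hT2b : HasDerivAt
      (fun y : ℝ => ∫ u in Real.sqrt (y / r)..s,
        (Li (y / u) / Real.log u - Li (x / u) / Real.log u))
      0 x := by
    apply hasDerivAt_zero_of_sq_bound (C := M)
    filter_upwards [Metric.ball_mem_nhds x hε] with y hy
    have hyI := hyIcc y hy
    have hay := hamem y hyI
    have hdiffbound : ∀ u ∈ Set.uIoc (Real.sqrt (y / r)) s,
        ‖Li (y / u) / Real.log u - Li (x / u) / Real.log u‖ ≤ M * ‖y - x‖ := by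
      intro u hu
      have huI : u ∈ Set.Icc s₀ t₁ := (Set.uIoc_subset_uIcc.trans (hsub _ hay s hsmem)) hu
      exact (convex_Icc (x - ε) (x + ε)).norm_image_sub_le_of_norm_hasDerivWithin_le
        (f := fun z => Li (z / u) / Real.log u) (f' := fun z => f' z u)
        (fun z hz => (hfd z hz u huI).hasDerivWithinAt)
        (fun z hz => hbd z hz u huI) hxIcc hyI
    have h2 := intervalIntegral.norm_integral_le_of_norm_le_const hdiffbound
    rw [Real.norm_eq_abs] at h2
    have hxrm : x / r ∈ Set.Icc ((x - ε) / r) ((x + ε) / r) := by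
      constructor
      · gcongr
        linarith
      · gcongr
        linarith
    have hyrm : y / r ∈ Set.Icc ((x - ε) / r) ((x + ε) / r) := by
      constructor
      · gcongr
        exact hyI.1
      · gcongr
        exact hyI.2
    have h3 : |s - Real.sqrt (y / r)| ≤ |y - x| := by
      rw [hsdef]
      calc |Real.sqrt (x / r) - Real.sqrt (y / r)| ≤ |x / r - y / r| := by
            apply sqrt_lip _ hyrm hxrm
            rw [le_div_iff₀ hr0]
            linarith
        _ = |x - y| / r := by
            rw [div_sub_div_same, abs_div, abs_of_pos hr0]
        _ ≤ |x - y| := div_le_self (abs_nonneg _) hr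
        _ = |y - x| := abs_sub_comm x y
    calc |∫ u in Real.sqrt (y / r)..s, (Li (y / u) / Real.log u - Li (x / u) / Real.log u)|
        ≤ M * ‖y - x‖ * |s - Real.sqrt (y / r)| := h2
      _ = M * |y - x| * |s - Real.sqrt (y / r)| := by rw [Real.norm_eq_abs]
      _ ≤ M * |y - x| * |y - x| := by
          apply mul_le_mul_of_nonneg_left h3 (by positivity)
      _ = M * |y - x| ^ 2 := by ring
  have hT2 : HasDerivAt (fun y : ℝ => ∫ u in Real.sqrt (y / r)..s, Li (y / u) / Real.log u)
      (-(Li (x / s) / Real.log s) * (1 / (2 * s) * (1 / r)) + 0) x := by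
    apply HasDerivAt.congr_of_eventuallyEq (hT2a.add hT2b)
    filter_upwards [Metric.ball_mem_nhds x hε] with y hy
    have hyI := hyIcc y hy
    have hay := hamem y hyI
    have i1 : IntervalIntegrable (fun u => Li (x / u) / Real.log u) volume (Real.sqrt (y / r)) s :=
      hInt x hxIcc _ hay s hsmem
    have i2 : IntervalIntegrable (fun u => Li (y / u) / Real.log u) volume (Real.sqrt (y / r)) s :=
      hInt y hyI _ hay s hsmem
    simp only [Pi.add_apply]
    rw [← intervalIntegral.integral_add i1 (i2.sub i1)]
    exact intervalIntegral.integral_congr (fun u _ => by ring)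
  -- assemble B
  have hB : HasDerivAt (fun y : ℝ => ∫ u in Real.sqrt (y / r)..Real.sqrt y, Li (y / u) / Real.log u)
      ((-(Li (x / s) / Real.log s) * (1 / (2 * s) * (1 / r)) + 0) + (∫ u in s..t, f' x u)
        + (Li (x / t) / Real.log t * (1 / (2 * t)) + 0)) x := by
    apply HasDerivAt.congr_of_eventuallyEq ((hT2.add hQ).add hT1)
    filter_upwards [Metric.ball_mem_nhds x hε] with y hy
    have hyI := hyIcc y hy
    have hay := hamem y hyI
    have hby := hbmem y hyI
    have i1 := hInt y hyI _ hay s hsmem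
    have i2 := hInt y hyI s hsmem t htmem
    have i3 := hInt y hyI t htmem _ hby
    simp only [Pi.add_apply]
    rw [intervalIntegral.integral_add_adjacent_intervals i1 i2,
      intervalIntegral.integral_add_adjacent_intervals (i1.trans i2) i3]
  -- evaluate the remaining integral
  have hxr1 : 1 < x * r := by nlinarith
  have hxdr1 : 1 < x / r := by rw [lt_div_iff₀ hr0]; nlinarith
  have hlxr : 0 < Real.log (x * r) := Real.log_pos hxr1
  have hlxdr : 0 < Real.log (x / r) := Real.log_pos hxdr1
  have hval : (∫ u in s..t, f' x u)
      = (Real.log (Real.log (x * r)) - Real.log (Real.log (x / r))) / Real.log x := by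
    have key : ∀ u ∈ Set.uIcc s t,
        HasDerivAt (fun v => (Real.log (Real.log v) - Real.log (Real.log (x / v))) / Real.log x)
          (f' x u) u := by
      intro u hu
      rw [Set.uIcc_of_le hst] at hu
      have hu2 : 2 < u := lt_of_lt_of_le hs2 hu.1
      have hu0 : (0:ℝ) < u := by linarith
      have hxu : t ≤ x / u := by
        rw [le_div_iff₀ hu0]
        have htt : t * t = x := by rw [htdef]; exact Real.mul_self_sqrt hx0.le
        nlinarith [hu.2]
      have hxu1 : 1 < x / u := by linarith
      have hxu0 : (0:ℝ) < x / u := by linarith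
      have hlu : Real.log u ≠ 0 := ne_of_gt (Real.log_pos (by linarith))
      have hlxu : Real.log (x / u) ≠ 0 := ne_of_gt (Real.log_pos hxu1)
      have d1 : HasDerivAt (fun v : ℝ => Real.log (Real.log v)) ((Real.log u)⁻¹ * u⁻¹) u :=
        (Real.hasDerivAt_log hlu).comp u (Real.hasDerivAt_log hu0.ne')
      have d2 : HasDerivAt (fun v : ℝ => x / v) (x * (-(u ^ 2)⁻¹)) u := by
        simpa [div_eq_mul_inv] using (hasDerivAt_inv hu0.ne').const_mul x
      have d3 : HasDerivAt (fun v : ℝ => Real.log (Real.log (x / v)))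
          ((Real.log (x / u))⁻¹ * ((x / u)⁻¹ * (x * (-(u ^ 2)⁻¹)))) u :=
        by have := (Real.hasDerivAt_log hlxu).comp u ((Real.hasDerivAt_log hxu0.ne').comp u d2); exact this
      have d4 := (d1.sub d3).div_const (Real.log x)
      apply d4.congr_deriv
      have hld : Real.log (x / u) = Real.log x - Real.log u := Real.log_div hx0.ne' hu0.ne'
      have hd : Real.log x - Real.log u ≠ 0 := by rw [← hld]; exact hlxu
      rw [hf'def]
      simp only
      rw [hld]
      field_simp
      ring
    have hIcont : IntervalIntegrable (f' x) volume s t := by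
      apply ContinuousOn.intervalIntegrable
      apply hfc'.mono
      rw [Set.uIcc_of_le hst]
      exact Set.Icc_subset_Icc hsmem.1 htmem.2
    rw [intervalIntegral.integral_eq_sub_of_hasDerivAt key hIcont]
    have e1 : Real.log s = Real.log (x / r) / 2 := by
      rw [hsdef]; exact Real.log_sqrt (by positivity)
    have e2 : Real.log (r * s) = Real.log (x * r) / 2 := by
      have hrs : r * s = Real.sqrt (x * r) := by
        calc r * s = Real.sqrt (r ^ 2) * Real.sqrt (x / r) := by
              rw [Real.sqrt_sq hr0.le, hsdef]
          _ = Real.sqrt (r ^ 2 * (x / r)) := (Real.sqrt_mul (by positivity) _).symm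
          _ = Real.sqrt (x * r) := by congr 1; field_simp
      rw [hrs, Real.log_sqrt (by positivity)]
    simp only [hxt, hxs, e1, e2, Real.log_div hlxdr.ne' two_ne_zero,
      Real.log_div hlxr.ne' two_ne_zero]
    ring
  -- final assembly
  have hG := (hA.add hB).sub hC
  apply hG.congr_deriv
  rw [hxs, hxt, hval]
  ring
end
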